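/- Let a ∈ ℤ, n ∈ ℤ with n > 0, l ∈ ℤ with l ≥ 0, and β ∈ ℚ_p^×. The function u ↦ p^{−a·v(u)/n} · v(u)^l is absolutely integrable with respect to Haar measure on the set {u ∈ ℚ_p : 0 < |u| < |β|} if and only if a + n > 0. -/

import Mathlib

open Filter MeasureTheory
open scoped ENNReal

namespace PadicSub

variable (p : ℕ) [Fact p.Prime]

/-- The coefficients (indexed by multi-indices) of a restricted power series:
they tend to `0` along the cofinite filter. -/
def IsRestrictedCoeffs {m : ℕ} (a : (Fin m → ℕ) → ℚ_[p]) : Prop :=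
  Filter.Tendsto a Filter.cofinite (nhds 0)

/-- The restricted analytic function associated to a family of coefficients:
the sum of the power series on `ℤ_p^m`, and `0` outside `ℤ_p^m`. -/
noncomputable def ranalFn {m : ℕ} (a : (Fin m → ℕ) → ℚ_[p]) (x : Fin m → ℚ_[p]) : ℚ_[p] :=
  if ∀ j, ‖x j‖ ≤ 1 then ∑' i : (Fin m → ℕ), a i * ∏ j, x j ^ i j else 0

/-- `D`-functions: the functions obtained from restricted analytic functions, polynomial
maps, and the inverse function (with the convention `0⁻¹ = 0`) by repeated composition. -/
inductive IsDFunction : {m : ℕ} → ((Fin m → ℚ_[p]) → ℚ_[p]) → Prop where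
  | ranal {m : ℕ} (a : (Fin m → ℕ) → ℚ_[p]) (ha : IsRestrictedCoeffs p a) :
      IsDFunction (ranalFn p a)
  | poly {m : ℕ} (q : MvPolynomial (Fin m) ℚ_[p]) :
      IsDFunction (fun x => MvPolynomial.eval x q)
  | inv : IsDFunction (fun x : Fin 1 → ℚ_[p] => (x 0)⁻¹)
  | comp {m n : ℕ} (f : (Fin n → ℚ_[p]) → ℚ_[p]) (g : Fin n → (Fin m → ℚ_[p]) → ℚ_[p]) :
      IsDFunction f → (∀ i, IsDFunction (g i)) →
      IsDFunction (fun x => f (fun i => g i x))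

/-- `P_n`: the set of nonzero `n`-th powers in `ℚ_p`. -/
def Pset (n : ℕ) : Set ℚ_[p] := {x | ∃ y : ℚ_[p], y ≠ 0 ∧ y ^ n = x}

/-- The coset `μ P_n`. -/
def cosetP (μ : ℚ_[p]) (n : ℕ) : Set ℚ_[p] := {x | ∃ y ∈ Pset p n, x = μ * y}

/-- A (globally) subanalytic subset of `ℚ_p^m`: a finite union of finite intersections of
sets of the form `{x | f x = 0}` and `{x | f x ∈ P_n}`, `f` a `D`-function, `n > 0`. -/
def IsSubanalytic {m : ℕ} (X : Set (Fin m → ℚ_[p])) : Prop :=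
  ∃ (r s : ℕ) (F : Fin r → Fin s → Set (Fin m → ℚ_[p])),
    (∀ i j, (∃ f, IsDFunction p f ∧ F i j = {x | f x = 0}) ∨
            (∃ f n, IsDFunction p f ∧ 0 < n ∧ F i j = {x | f x ∈ Pset p n})) ∧
    X = ⋃ i, ⋂ j, F i j

/-- A semialgebraic subset of `ℚ_p^m`: a finite union of finite intersections of
sets of the form `{x | f x = 0}` and `{x | f x ∈ P_n}`, `f` a polynomial, `n > 0`. -/
def IsSemialgebraic {m : ℕ} (X : Set (Fin m → ℚ_[p])) : Prop :=
  ∃ (r s : ℕ) (F : Fin r → Fin s → Set (Fin m → ℚ_[p])),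
    (∀ i j, (∃ f : MvPolynomial (Fin m) ℚ_[p], F i j = {x | MvPolynomial.eval x f = 0}) ∨
            (∃ (f : MvPolynomial (Fin m) ℚ_[p]) (n : ℕ), 0 < n ∧
              F i j = {x | MvPolynomial.eval x f ∈ Pset p n})) ∧
    X = ⋃ i, ⋂ j, F i j

/-- The graph of the restriction to `X` of a map `ℚ_p^m → ℚ_p^n`, inside `ℚ_p^(m+n)`. -/
def graphMap {m n : ℕ} (X : Set (Fin m → ℚ_[p])) (F : (Fin m → ℚ_[p]) → (Fin n → ℚ_[p])) :
    Set (Fin (m + n) → ℚ_[p]) :=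
  {z | (fun i => z (Fin.castAdd n i)) ∈ X ∧
    F (fun i => z (Fin.castAdd n i)) = fun j => z (Fin.natAdd m j)}

/-- The graph of the restriction to `X` of a function `ℚ_p^m → ℚ_p`, inside `ℚ_p^(m+1)`. -/
def graphFun {m : ℕ} (X : Set (Fin m → ℚ_[p])) (f : (Fin m → ℚ_[p]) → ℚ_[p]) :
    Set (Fin (m + 1) → ℚ_[p]) :=
  {z | (fun i : Fin m => z i.castSucc) ∈ X ∧ f (fun i : Fin m => z i.castSucc) = z (Fin.last m)}

/-- A function `ℚ_p^m → ℚ_p` is subanalytic on `X` if its graph over `X` is subanalytic. -/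
def IsSubanalyticFnOn {m : ℕ} (X : Set (Fin m → ℚ_[p])) (f : (Fin m → ℚ_[p]) → ℚ_[p]) : Prop :=
  IsSubanalytic p (graphFun p X f)

/-- A (totally defined) subanalytic function `ℚ_p^m → ℚ_p`. -/
def IsSubanalyticFn {m : ℕ} (f : (Fin m → ℚ_[p]) → ℚ_[p]) : Prop :=
  IsSubanalyticFnOn p Set.univ f

/-- A function `ℚ_p^m → ℚ_p` is semialgebraic on `X` if its graph over `X` is
semialgebraic. -/
def IsSemialgebraicFnOn {m : ℕ} (X : Set (Fin m → ℚ_[p])) (f : (Fin m → ℚ_[p]) → ℚ_[p]) :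
    Prop :=
  IsSemialgebraic p (graphFun p X f)

/-- A subanalytic subset of `ℚ_p` (one-variable version). -/
def IsSubanalytic1 (X : Set ℚ_[p]) : Prop :=
  IsSubanalytic p {z : Fin 1 → ℚ_[p] | z 0 ∈ X}

/-- A semialgebraic subset of `ℚ_p` (one-variable version). -/
def IsSemialgebraic1 (X : Set ℚ_[p]) : Prop :=
  IsSemialgebraic p {z : Fin 1 → ℚ_[p] | z 0 ∈ X}

/-- A function `ℚ_p → ℚ_p` subanalytic on `X ⊆ ℚ_p`: its graph over `X` is a subanalytic
subset of `ℚ_p²`. -/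
def IsSubanalyticFnOn1 (X : Set ℚ_[p]) (f : ℚ_[p] → ℚ_[p]) : Prop :=
  IsSubanalytic p {z : Fin 2 → ℚ_[p] | z 0 ∈ X ∧ f (z 0) = z 1}

/-- A function `ℚ_p → ℚ_p` semialgebraic on `X ⊆ ℚ_p`: its graph over `X` is a
semialgebraic subset of `ℚ_p²`. -/
def IsSemialgebraicFnOn1 (X : Set ℚ_[p]) (f : ℚ_[p] → ℚ_[p]) : Prop :=
  IsSemialgebraic p {z : Fin 2 → ℚ_[p] | z 0 ∈ X ∧ f (z 0) = z 1}

/-- Interpretation of the symbols `□ᵢ` in the definition of cells: `true` means `<` and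
`false` means "no condition". -/
def sqRel (b : Bool) (x y : ℝ) : Prop := b = true → x < y

/-- A cell in `ℚ_p`, presented with its center `γ` and coset data `μ`, `n`. -/
def IsCell1 (A : Set ℚ_[p]) (γ μ : ℚ_[p]) (n : ℕ) : Prop :=
  0 < n ∧ A.Nonempty ∧
  ∃ (α β : ℚ_[p]) (b₁ b₂ : Bool), α ≠ 0 ∧ β ≠ 0 ∧
    A = {t | sqRel b₁ ‖α‖ ‖t - γ‖ ∧ sqRel b₂ ‖t - γ‖ ‖β‖ ∧ t - γ ∈ cosetP p μ n}

/-- Subanalytic cells in `ℚ_p^(m+1)`, defined inductively, presented with their center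
`γ : ℚ_p^m → ℚ_p` and coset data `μ`, `n`.  The projection of the cell onto the first `m`
coordinates is required to be a cell. -/
inductive IsCell : {m : ℕ} → Set (Fin (m + 1) → ℚ_[p]) →
    ((Fin m → ℚ_[p]) → ℚ_[p]) → ℚ_[p] → ℕ → Prop where
  | base (n : ℕ) (hn : 0 < n) (μ γ0 α β : ℚ_[p]) (hα : α ≠ 0) (hβ : β ≠ 0)
      (b₁ b₂ : Bool) (A : Set (Fin 1 → ℚ_[p])) (hne : A.Nonempty)
      (hA : A = {z | sqRel b₁ ‖α‖ ‖z 0 - γ0‖ ∧ sqRel b₂ ‖z 0 - γ0‖ ‖β‖ ∧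
        z 0 - γ0 ∈ cosetP p μ n}) :
      IsCell A (fun _ => γ0) μ n
  | succ {m : ℕ} {D : Set (Fin (m + 1) → ℚ_[p])} {γD : (Fin m → ℚ_[p]) → ℚ_[p]}
      {μD : ℚ_[p]} {nD : ℕ} (hD : IsCell D γD μD nD)
      (n : ℕ) (hn : 0 < n) (μ : ℚ_[p]) (α β γ : (Fin (m + 1) → ℚ_[p]) → ℚ_[p])
      (hα : IsSubanalyticFn p α) (hβ : IsSubanalyticFn p β) (hγ : IsSubanalyticFn p γ)
      (hα0 : ∀ x, α x ≠ 0) (hβ0 : ∀ x, β x ≠ 0)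
      (b₁ b₂ : Bool) (A : Set (Fin (m + 2) → ℚ_[p]))
      (hA : A = {z | (fun i : Fin (m + 1) => z i.castSucc) ∈ D ∧
          sqRel b₁ ‖α (fun i : Fin (m + 1) => z i.castSucc)‖
            ‖z (Fin.last (m + 1)) - γ (fun i : Fin (m + 1) => z i.castSucc)‖ ∧
          sqRel b₂ ‖z (Fin.last (m + 1)) - γ (fun i : Fin (m + 1) => z i.castSucc)‖
            ‖β (fun i : Fin (m + 1) => z i.castSucc)‖ ∧
          z (Fin.last (m + 1)) - γ (fun i : Fin (m + 1) => z i.castSucc) ∈ cosetP p μ n})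
      (hproj : (fun (z : Fin (m + 2) → ℚ_[p]) (i : Fin (m + 1)) => z i.castSucc) '' A = D) :
      IsCell A γ μ n

/-- Analytic cells in `ℚ_p^(m+1)`: as subanalytic cells, but at each stage of the inductive
definition the functions `α`, `β`, `γ` are moreover analytic on the projection of the cell. -/
inductive IsAnalyticCell : {m : ℕ} → Set (Fin (m + 1) → ℚ_[p]) →
    ((Fin m → ℚ_[p]) → ℚ_[p]) → ℚ_[p] → ℕ → Prop where
  | base (n : ℕ) (hn : 0 < n) (μ γ0 α β : ℚ_[p]) (hα : α ≠ 0) (hβ : β ≠ 0)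
      (b₁ b₂ : Bool) (A : Set (Fin 1 → ℚ_[p])) (hne : A.Nonempty)
      (hA : A = {z | sqRel b₁ ‖α‖ ‖z 0 - γ0‖ ∧ sqRel b₂ ‖z 0 - γ0‖ ‖β‖ ∧
        z 0 - γ0 ∈ cosetP p μ n}) :
      IsAnalyticCell A (fun _ => γ0) μ n
  | succ {m : ℕ} {D : Set (Fin (m + 1) → ℚ_[p])} {γD : (Fin m → ℚ_[p]) → ℚ_[p]}
      {μD : ℚ_[p]} {nD : ℕ} (hD : IsAnalyticCell D γD μD nD)
      (n : ℕ) (hn : 0 < n) (μ : ℚ_[p]) (α β γ : (Fin (m + 1) → ℚ_[p]) → ℚ_[p])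
      (hα : IsSubanalyticFn p α) (hβ : IsSubanalyticFn p β) (hγ : IsSubanalyticFn p γ)
      (hαan : AnalyticOn ℚ_[p] α D) (hβan : AnalyticOn ℚ_[p] β D)
      (hγan : AnalyticOn ℚ_[p] γ D)
      (hα0 : ∀ x, α x ≠ 0) (hβ0 : ∀ x, β x ≠ 0)
      (b₁ b₂ : Bool) (A : Set (Fin (m + 2) → ℚ_[p]))
      (hA : A = {z | (fun i : Fin (m + 1) => z i.castSucc) ∈ D ∧
          sqRel b₁ ‖α (fun i : Fin (m + 1) => z i.castSucc)‖
            ‖z (Fin.last (m + 1)) - γ (fun i : Fin (m + 1) => z i.castSucc)‖ ∧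
          sqRel b₂ ‖z (Fin.last (m + 1)) - γ (fun i : Fin (m + 1) => z i.castSucc)‖
            ‖β (fun i : Fin (m + 1) => z i.castSucc)‖ ∧
          z (Fin.last (m + 1)) - γ (fun i : Fin (m + 1) => z i.castSucc) ∈ cosetP p μ n})
      (hproj : (fun (z : Fin (m + 2) → ℚ_[p]) (i : Fin (m + 1)) => z i.castSucc) '' A = D) :
      IsAnalyticCell A γ μ n

/-- Generators of the algebra of subanalytic constructible functions on `ℚ_p^m`:
`ℤ`-valued valuations of nonvanishing subanalytic functions, and (`ℚ`-valued) norms of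
subanalytic functions. -/
def constructibleGens (m : ℕ) : Set ((Fin m → ℚ_[p]) → ℚ) :=
  {g | ∃ h : (Fin m → ℚ_[p]) → ℚ_[p], IsSubanalyticFn p h ∧ (∀ x, h x ≠ 0) ∧
        g = fun x => ((h x).valuation : ℚ)} ∪
  {g | ∃ h : (Fin m → ℚ_[p]) → ℚ_[p], IsSubanalyticFn p h ∧
        g = fun x => (padicNormE (h x) : ℚ)}

/-- The `ℚ`-algebra `C(ℚ_p^m)` of subanalytic constructible functions on `ℚ_p^m`. -/
noncomputable def ConstructibleAlg (m : ℕ) : Subalgebra ℚ ((Fin m → ℚ_[p]) → ℚ) :=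
  Algebra.adjoin ℚ (constructibleGens p m)

/-- `ℤ_p^m` as a subset of `ℚ_p^m`. -/
def ZpSet (m : ℕ) : Set (Fin m → ℚ_[p]) := {x | ∀ j, ‖x j‖ ≤ 1}

/-- A simple subset of `ℤ^n × ℚ_p^m`. -/
def IsSimpleSet (n m : ℕ) (A : Set ((Fin n → ℤ) × (Fin m → ℚ_[p]))) : Prop :=
  IsSubanalytic p {z : Fin (n + m) → ℚ_[p] |
    (∀ i : Fin n, z (Fin.castAdd m i) ≠ 0) ∧
    ((fun i : Fin n => (z (Fin.castAdd m i)).valuation),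
      fun j : Fin m => z (Fin.natAdd n j)) ∈ A}

/-- A simple function `ℤ^n × ℚ_p^m → ℤ`: one whose graph is a simple set. -/
def IsSimpleFn (n m : ℕ) (h : (Fin n → ℤ) × (Fin m → ℚ_[p]) → ℤ) : Prop :=
  IsSimpleSet p (n + 1) m
    {w | w.1 (Fin.last n) = h (fun i : Fin n => w.1 i.castSucc, w.2)}

/-- Generators of `C_simple(ℤ^n × ℚ_p^m)`: simple functions, and `p^h` for `h` simple. -/
def simpleGens (n m : ℕ) : Set ((Fin n → ℤ) × (Fin m → ℚ_[p]) → ℚ) :=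
  {g | ∃ h, IsSimpleFn p n m h ∧ g = fun w => (h w : ℚ)} ∪
  {g | ∃ h, IsSimpleFn p n m h ∧ g = fun w => (p : ℚ) ^ (h w)}

/-- The `ℚ`-algebra `C_simple(ℤ^n × ℚ_p^m)`. -/
noncomputable def SimpleAlg (n m : ℕ) : Subalgebra ℚ ((Fin n → ℤ) × (Fin m → ℚ_[p]) → ℚ) :=
  Algebra.adjoin ℚ (simpleGens p n m)

noncomputable instance : MeasurableSpace ℚ_[p] := borel _
instance : BorelSpace ℚ_[p] := ⟨rfl⟩

end PadicSub

/-!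
On the sphere `‖u‖ = p^{-m}` the integrand is constant, equal to `p^{-am/n} m^l`. The sphere has
Haar measure `(1 - p⁻¹) p^{-m} ν(ℤ_p)`: scaling by a unit `x` multiplies Haar measure by `‖x‖`,
because `ℤ_p` is the disjoint union of the `p` balls `j + pℤ_p` and `x ℤ_p` only depends on `‖x‖`.
Integrability on the punctured ball thus amounts to the convergence of `∑_{m > v(β)} |m|^l r^m`
with `r = p^{-(a+n)/n}`, which holds iff `r < 1`, i.e. iff `a + n > 0`.
-/

open Metric Function
open scoped NNReal Pointwise

section PiecewiseConstant

variable {α E ι : Type*} [MeasurableSpace α] [NormedAddCommGroup E] [Countable ι]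
  {μ : Measure α} {s : ι → Set α} {f : α → E} {c : ι → E}

theorem integrableOn_iUnion_iff_summable_of_eqOn (hs : ∀ i, MeasurableSet (s i))
    (hd : Pairwise (Disjoint on s)) (hμ : ∀ i, μ (s i) ≠ ∞)
    (hf : ∀ i, Set.EqOn f (fun _ => c i) (s i)) :
    IntegrableOn f (⋃ i, s i) μ ↔ Summable fun i => ‖c i‖ * μ.real (s i) := by
  have hmeas : AEStronglyMeasurable f (μ.restrict (⋃ i, s i)) :=
    aestronglyMeasurable_iUnion_iff.2 fun i => aestronglyMeasurable_const.congr
      ((ae_restrict_iff' (hs i)).2 (ae_of_all _ fun _ hx => (hf i hx).symm))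
  have hpiece (i : ι) :
      ∫⁻ x in s i, ‖f x‖ₑ ∂μ = ((‖c i‖₊ * (μ (s i)).toNNReal : ℝ≥0) : ℝ≥0∞) := by
    rw [setLIntegral_congr_fun (hs i) fun x hx => by rw [hf i hx], setLIntegral_const,
      ENNReal.coe_mul, ENNReal.coe_toNNReal (hμ i)]
    rfl
  rw [IntegrableOn, Integrable, and_iff_right hmeas, HasFiniteIntegral, lintegral_iUnion hs hd]
  simp_rw [hpiece]
  rw [lt_top_iff_ne_top, ENNReal.tsum_coe_ne_top_iff_summable, ← NNReal.summable_coe]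
  simp only [NNReal.coe_mul, coe_nnnorm, measureReal_def]
  rfl

end PiecewiseConstant

theorem summable_abs_add_pow_mul_geometric_iff (k₀ : ℤ) (l : ℕ) {r : ℝ} (hr : 0 < r) :
    Summable (fun k : ℕ => |(k₀ + k : ℝ)| ^ l * r ^ k) ↔ r < 1 := by
  set K := k₀.natAbs
  have hK : |(k₀ : ℝ)| = K := by rw [Nat.cast_natAbs, Int.cast_abs]
  constructor
  · intro h
    have hgeom : Summable (fun k : ℕ => r ^ k) := by
      refine h.of_norm_bounded_eventually_nat ?_
      filter_upwards [eventually_ge_atTop (K + 1)] with k hk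
      have hk' : 1 ≤ |(k₀ + k : ℝ)| := by
        have : (K : ℝ) + 1 ≤ k := by exact_mod_cast hk
        rw [le_abs]; left; linarith [neg_abs_le (k₀ : ℝ)]
      rw [norm_pow, Real.norm_of_nonneg hr.le]
      exact le_mul_of_one_le_left (by positivity) (one_le_pow₀ hk')
    rwa [summable_geometric_iff_norm_lt_one, Real.norm_of_nonneg hr.le] at hgeom
  · intro h
    have hshift : Summable (fun k : ℕ => ((k + K : ℕ) : ℝ) ^ l * r ^ (k + K)) :=
      (summable_nat_add_iff (f := fun m : ℕ => (m : ℝ) ^ l * r ^ m) K).2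
        (summable_pow_mul_geometric_of_norm_lt_one l (by rwa [Real.norm_of_nonneg hr.le]))
    refine (hshift.mul_left (r ^ K)⁻¹).of_nonneg_of_le (fun k => by positivity) fun k => ?_
    have hle : |(k₀ + k : ℝ)| ≤ ((k + K : ℕ) : ℝ) := by
      push_cast
      linarith [abs_add_le (k₀ : ℝ) k, abs_of_nonneg (Nat.cast_nonneg (α := ℝ) k)]
    calc |(k₀ + k : ℝ)| ^ l * r ^ k ≤ ((k + K : ℕ) : ℝ) ^ l * r ^ k := by gcongr
      _ = (r ^ K)⁻¹ * (((k + K : ℕ) : ℝ) ^ l * r ^ (k + K)) := by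
        rw [pow_add]; field_simp

theorem Real.rpow_neg_mul_div_mul_zpow_neg {x : ℝ} (hx : 0 < x) (a : ℝ) {n : ℝ} (hn : n ≠ 0)
    (m : ℤ) : x ^ (-(a * m) / n) * x ^ (-m) = (x ^ (-(a + n) / n)) ^ m := by
  rw [← Real.rpow_intCast x (-m), ← Real.rpow_add hx, ← Real.rpow_mul_intCast hx.le]
  congr 1
  push_cast
  field_simp
  ring

theorem distribHaarChar_eq_of_norm_eq {𝕜 : Type*} [NontriviallyNormedField 𝕜]
    [LocallyCompactSpace 𝕜] {u w : 𝕜ˣ} (h : ‖(u : 𝕜)‖ = ‖(w : 𝕜)‖) :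
    distribHaarChar 𝕜 u = distribHaarChar 𝕜 w := by
  borelize 𝕜
  have : ProperSpace 𝕜 := .of_nontriviallyNormedField_of_weaklyLocallyCompactSpace 𝕜
  have hB₀ : Measure.addHaar (closedBall (0 : 𝕜) 1) ≠ 0 :=
    (measure_closedBall_pos _ _ one_pos).ne'
  have hB : Measure.addHaar (closedBall (0 : 𝕜) 1) ≠ ∞ := (isCompact_closedBall 0 1).measure_ne_top
  refine distribHaarChar_eq_of_measure_smul_eq_mul hB₀ hB ?_
  have hsmul (g : 𝕜ˣ) : g • closedBall (0 : 𝕜) 1 = closedBall 0 ‖(g : 𝕜)‖ := by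
    rw [Units.smul_def, smul_closedBall' g.ne_zero, smul_zero, mul_one]
  rw [hsmul, h, ← hsmul, distribHaarChar_mul]

namespace Padic

variable {p : ℕ} [Fact p.Prime]

theorem one_lt_p : (1 : ℝ) < p := Nat.one_lt_cast.2 (Fact.out : p.Prime).one_lt

theorem ball_zero_one_eq_smul : ball (0 : ℚ_[p]) 1 = (p : ℚ_[p]) • closedBall 0 1 := by
  ext x
  rw [smul_closedBall' (NeZero.ne _), smul_zero, norm_p, mul_one, mem_ball_zero_iff,
    mem_closedBall_zero_iff, ← zpow_neg_one, norm_le_pow_iff_norm_lt_pow_add_one,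
    neg_add_cancel, zpow_zero]

theorem closedBall_zero_one_eq_biUnion :
    closedBall (0 : ℚ_[p]) 1 = ⋃ j ∈ Finset.range p, ball (j : ℚ_[p]) 1 := by
  ext x
  simp only [mem_closedBall_zero_iff, Set.mem_iUnion, Finset.mem_range, mem_ball, dist_eq_norm,
    exists_prop]
  constructor
  · intro hx
    obtain ⟨j, hjp, hj⟩ := PadicInt.exists_mem_range (x := ⟨x, hx⟩)
    exact ⟨j, hjp, PadicInt.mem_nonunits.1 hj⟩
  · rintro ⟨j, -, hj⟩
    calc ‖x‖ = ‖(x - j) + j‖ := by rw [sub_add_cancel]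
      _ ≤ max ‖x - j‖ ‖(j : ℚ_[p])‖ := nonarchimedean _ _
      _ ≤ 1 := max_le hj.le (IsUltrametricDist.norm_natCast_le_one ℚ_[p] j)

theorem pairwiseDisjoint_ball_natCast :
    (Set.Iio p).PairwiseDisjoint fun j : ℕ => ball (j : ℚ_[p]) 1 := by
  intro i hi j hj hij
  refine Set.disjoint_left.2 fun x hxi hxj => hij ?_
  have hdist : ‖((i - j : ℤ) : ℚ_[p])‖ < 1 := by
    rw [Int.cast_sub, Int.cast_natCast, Int.cast_natCast, ← dist_eq_norm]
    calc dist (i : ℚ_[p]) j ≤ max (dist (i : ℚ_[p]) x) (dist x j) :=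
          IsUltrametricDist.dist_triangle_max _ _ _
      _ < 1 := max_lt (mem_ball'.1 hxi) (mem_ball.1 hxj)
  have := Int.eq_zero_of_abs_lt_dvd (norm_intCast_lt_one_iff.1 hdist)
    (by rw [abs_sub_lt_iff]; simp only [Set.mem_Iio] at hi hj; omega)
  omega

theorem addHaar_closedBall_zero_one_eq_mul_ball (μ : Measure ℚ_[p]) [μ.IsAddHaarMeasure] :
    μ (closedBall 0 1) = p * μ (ball 0 1) := by
  rw [closedBall_zero_one_eq_biUnion, measure_biUnion_finset
    (by simpa using pairwiseDisjoint_ball_natCast) fun _ _ => measurableSet_ball]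
  simp [Measure.addHaar_ball_center]

theorem distribHaarChar_p :
    distribHaarChar ℚ_[p] (Units.mk0 (p : ℚ_[p]) (NeZero.ne _)) = (p : ℝ≥0)⁻¹ := by
  let μ : Measure ℚ_[p] := Measure.addHaar
  have hB₀ : μ (closedBall 0 1) ≠ 0 := (measure_closedBall_pos _ _ one_pos).ne'
  have hB : μ (closedBall 0 1) ≠ ∞ := (isCompact_closedBall 0 1).measure_ne_top
  have hp₀ : (p : ℝ≥0∞) ≠ 0 := NeZero.ne _
  refine distribHaarChar_eq_of_measure_smul_eq_mul hB₀ hB ?_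
  rw [Units.smul_mk0, ← ball_zero_one_eq_smul, ENNReal.coe_inv (NeZero.ne _),
    ENNReal.coe_natCast, addHaar_closedBall_zero_one_eq_mul_ball, ← mul_assoc,
    ENNReal.inv_mul_cancel hp₀ (ENNReal.natCast_ne_top p), one_mul]

theorem distribHaarChar_eq_nnnorm (u : ℚ_[p]ˣ) :
    distribHaarChar ℚ_[p] u = ‖(u : ℚ_[p])‖₊ := by
  set v := (u : ℚ_[p]).valuation
  have hnorm :
      ‖(u : ℚ_[p])‖ = ‖((Units.mk0 (p : ℚ_[p]) (NeZero.ne _) ^ v : ℚ_[p]ˣ) : ℚ_[p])‖ := by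
    rw [Units.val_zpow_eq_zpow_val, Units.val_mk0, norm_p_zpow,
      norm_eq_zpow_neg_valuation u.ne_zero]
  rw [distribHaarChar_eq_of_norm_eq hnorm, map_zpow, distribHaarChar_p, ← NNReal.coe_inj,
    coe_nnnorm, hnorm]
  push_cast
  rw [Units.val_mk0, norm_zpow, norm_p]

theorem addHaar_closedBall_norm (μ : Measure ℚ_[p]) [μ.IsAddHaarMeasure] {x : ℚ_[p]}
    (hx : x ≠ 0) : μ (closedBall 0 ‖x‖) = ‖x‖₊ * μ (closedBall 0 1) := by
  have := distribHaarChar_mul μ (Units.mk0 x hx) (closedBall 0 1)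
  rwa [distribHaarChar_eq_nnnorm, Units.val_mk0, Units.smul_mk0, smul_closedBall' hx, smul_zero,
    mul_one, eq_comm] at this

theorem ball_zero_norm_eq_closedBall {x : ℚ_[p]} (hx : x ≠ 0) :
    ball (0 : ℚ_[p]) ‖x‖ = closedBall 0 ‖x * p‖ := by
  rw [← mul_one ‖x‖, ← smul_zero x, ← _root_.smul_ball hx, ball_zero_one_eq_smul, smul_smul,
    smul_closedBall' (mul_ne_zero hx (NeZero.ne _)), smul_zero, smul_zero, mul_one]

theorem addHaar_real_sphere_norm (μ : Measure ℚ_[p]) [μ.IsAddHaarMeasure] {x : ℚ_[p]}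
    (hx : x ≠ 0) :
    μ.real (sphere 0 ‖x‖) = (1 - (p : ℝ)⁻¹) * ‖x‖ * μ.real (closedBall 0 1) := by
  have hxp : x * p ≠ 0 := mul_ne_zero hx (NeZero.ne _)
  rw [← closedBall_sdiff_ball, measureReal_sdiff ball_subset_closedBall measurableSet_ball
      (isCompact_closedBall 0 _).measure_ne_top, ball_zero_norm_eq_closedBall hx,
    measureReal_def, measureReal_def, addHaar_closedBall_norm μ hx, addHaar_closedBall_norm μ hxp,
    ENNReal.toReal_mul, ENNReal.toReal_mul, ← measureReal_def]
  simp only [ENNReal.coe_toReal, coe_nnnorm, norm_mul, norm_p]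
  ring

theorem mem_sphere_norm_p_zpow {u : ℚ_[p]} {m : ℤ} :
    u ∈ sphere 0 ‖(p : ℚ_[p]) ^ m‖ ↔ u ≠ 0 ∧ u.valuation = m := by
  rw [mem_sphere_zero_iff_norm, norm_p_zpow]
  constructor
  · intro h
    have hu : u ≠ 0 := norm_pos_iff.1 (h ▸ zpow_pos (zero_lt_one.trans one_lt_p) _)
    rw [norm_eq_zpow_neg_valuation hu] at h
    exact ⟨hu, neg_inj.1 (zpow_right_injective₀ (zero_lt_one.trans one_lt_p) one_lt_p.ne' h)⟩
  · rintro ⟨hu, rfl⟩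
    exact norm_eq_zpow_neg_valuation hu

theorem setOf_norm_pos_lt_eq_iUnion_sphere {β : ℚ_[p]} (hβ : β ≠ 0) :
    {u : ℚ_[p] | 0 < ‖u‖ ∧ ‖u‖ < ‖β‖} =
      ⋃ k : ℕ, sphere 0 ‖(p : ℚ_[p]) ^ (β.valuation + 1 + k)‖ := by
  ext u
  simp only [Set.mem_ofPred_eq, Set.mem_iUnion, mem_sphere_norm_p_zpow, norm_pos_iff]
  constructor
  · rintro ⟨hu, hlt⟩
    rw [norm_eq_zpow_neg_valuation hu, norm_eq_zpow_neg_valuation hβ,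
      zpow_lt_zpow_iff_right₀ one_lt_p] at hlt
    exact ⟨(u.valuation - β.valuation - 1).toNat, hu, by omega⟩
  · rintro ⟨k, hu, hv⟩
    refine ⟨hu, ?_⟩
    rw [norm_eq_zpow_neg_valuation hu, norm_eq_zpow_neg_valuation hβ,
      zpow_lt_zpow_iff_right₀ one_lt_p]
    omega

theorem integrableOn_comp_valuation_iff {E : Type*} [NormedAddCommGroup E] (ν : Measure ℚ_[p])
    [ν.IsAddHaarMeasure] (g : ℤ → E) {β : ℚ_[p]} (hβ : β ≠ 0) :
    IntegrableOn (fun u => g u.valuation) {u | 0 < ‖u‖ ∧ ‖u‖ < ‖β‖} ν ↔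
      Summable fun k : ℕ =>
        ‖g (β.valuation + 1 + k)‖ * (p : ℝ) ^ (-(β.valuation + 1 + k)) := by
  have hB : (1 - (p : ℝ)⁻¹) * ν.real (closedBall 0 1) ≠ 0 := by
    have : (p : ℝ)⁻¹ < 1 := inv_lt_one_of_one_lt₀ one_lt_p
    have : 0 < ν.real (closedBall 0 1) := ENNReal.toReal_pos
      (measure_closedBall_pos _ 0 one_pos).ne' (isCompact_closedBall 0 1).measure_ne_top
    positivity
  rw [setOf_norm_pos_lt_eq_iUnion_sphere hβ, integrableOn_iUnion_iff_summable_of_eqOn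
    (c := fun k : ℕ => g (β.valuation + 1 + k)) (fun _ => isClosed_sphere.measurableSet)
    (fun i j hij => Set.disjoint_left.2 fun u hi hj => hij ?_)
    (fun _ => (isCompact_sphere 0 _).measure_ne_top)
    (fun k u hu => by rw [(mem_sphere_norm_p_zpow.1 hu).2])]
  · simp_rw [addHaar_real_sphere_norm ν (zpow_ne_zero _ (NeZero.ne (p : ℚ_[p]))), norm_p_zpow]
    refine Iff.trans (Iff.of_eq (congrArg Summable (funext fun k => ?_)))
      (summable_mul_right_iff hB)
    ring
  · have := (mem_sphere_norm_p_zpow.1 hi).2.symm.trans (mem_sphere_norm_p_zpow.1 hj).2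
    omega

end Padic

open PadicSub MeasureTheory in
theorem integrability_criterion_on_punctured_ball_general
    (p : ℕ) [Fact p.Prime] (a n : ℤ) (hn : 0 < n) (l : ℕ) (β : ℚ_[p]) (hβ : β ≠ 0)
    (ν : Measure ℚ_[p]) (hν : ν.IsAddHaarMeasure) :
    IntegrableOn
      (fun u : ℚ_[p] =>
        (p : ℝ) ^ (-((a : ℝ) * (u.valuation : ℝ)) / (n : ℝ)) * (u.valuation : ℝ) ^ l)
      {u : ℚ_[p] | 0 < ‖u‖ ∧ ‖u‖ < ‖β‖} ν ↔ 0 < a + n := by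
  rw [Padic.integrableOn_comp_valuation_iff ν
    (fun m : ℤ => (p : ℝ) ^ (-((a : ℝ) * m) / n) * (m : ℝ) ^ l) hβ]
  set k₀ := β.valuation + 1
  set r := (p : ℝ) ^ (-((a : ℝ) + n) / n)
  have hp₀ : (0 : ℝ) < p := zero_lt_one.trans Padic.one_lt_p
  have hr : 0 < r := Real.rpow_pos_of_pos hp₀ _
  have hterm (k : ℕ) :
      ‖(p : ℝ) ^ (-((a : ℝ) * ((k₀ + k : ℤ) : ℝ)) / n) * ((k₀ + k : ℤ) : ℝ) ^ l‖ *
        (p : ℝ) ^ (-(k₀ + k)) = r ^ k₀ * (|(k₀ + k : ℝ)| ^ l * r ^ k) := by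
    rw [norm_mul, norm_pow, Real.norm_of_nonneg (by positivity), Real.norm_eq_abs, mul_right_comm,
      Real.rpow_neg_mul_div_mul_zpow_neg hp₀ _ (by exact_mod_cast hn.ne'),
      zpow_add₀ hr.ne', zpow_natCast]
    push_cast
    ring
  simp_rw [hterm]
  rw [summable_mul_left_iff (zpow_pos hr k₀).ne',
    summable_abs_add_pow_mul_geometric_iff k₀ l hr,
    ← Real.rpow_zero (p : ℝ), Real.rpow_lt_rpow_left_iff Padic.one_lt_p,
    div_lt_iff₀ (by exact_mod_cast hn), zero_mul, neg_lt_zero]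
  exact_mod_cast Iff.rfl

open PadicSub MeasureTheory in
/-- The integrability criterion used in the proof of Theorem 4.3 of the paper:
for `a ∈ ℤ`, `n > 0`, `l ≥ 0` and `β ∈ ℚ_p^×`, the function
`u ↦ p^{-a·v(u)/n} · v(u)^l` is absolutely integrable on `{u : 0 < |u| < |β|}` for the
Haar measure if and only if `a + n > 0`. -/
theorem integrability_criterion_on_punctured_ball
    (p : ℕ) [Fact p.Prime] (a n : ℤ) (hn : 0 < n) (l : ℕ) (β : ℚ_[p]) (hβ : β ≠ 0)
    (ν : Measure ℚ_[p]) (hν : ν.IsAddHaarMeasure) (hν1 : ν {x : ℚ_[p] | ‖x‖ ≤ 1} = 1) :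
    IntegrableOn
      (fun u : ℚ_[p] =>
        (p : ℝ) ^ (-((a : ℝ) * (u.valuation : ℝ)) / (n : ℝ)) * (u.valuation : ℝ) ^ l)
      {u : ℚ_[p] | 0 < ‖u‖ ∧ ‖u‖ < ‖β‖} ν ↔ 0 < a + n :=
  integrability_criterion_on_punctured_ball_general p a n hn l β hβ ν hν
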